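/- arXiv:2404.03357 — 4 statements merged into one kernel-verified Lean document; each statement's English description precedes it below -/
import Mathlib

section
/- Let β1, β2, L2 be real constants with β1 = 0 and β2 < 0. Then the fixed point 0 of g is nonlinearly stable: there exists ε > 0 such that for every ρ0 ∈ (0, ε), the sequence of iterates ρ_n = g^[n](ρ0) is strictly decreasing and tends to 0 as n → ∞. -/
open Filter Topology

/-- For the truncated ρ-map `g ρ = ρ (1 + β1 + β2 ρ² + L2 ρ⁴)` of the Chenciner
normal form, if `β1 = 0` and `β2 < 0`, then the fixed point `0` is nonlinearly
stable: small positive orbits decrease strictly to `0`. -/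
theorem chenciner_origin_nonlinearly_stable
    (β1 β2 L2 : ℝ) (hβ1 : β1 = 0) (hβ2 : β2 < 0)
    (g : ℝ → ℝ)
    (hg : ∀ ρ : ℝ, g ρ = ρ * (1 + β1 + β2 * ρ ^ 2 + L2 * ρ ^ 4)) :
    ∃ ε > (0 : ℝ), ∀ ρ0 : ℝ, 0 < ρ0 → ρ0 < ε →
      StrictAnti (fun n : ℕ => g^[n] ρ0) ∧
      Tendsto (fun n : ℕ => g^[n] ρ0) atTop (𝓝 0) := by
  subst hβ1
  have hgc : Continuous g := by
    have : g = fun ρ => ρ * (1 + 0 + β2 * ρ ^ 2 + L2 * ρ ^ 4) := funext hg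
    rw [this]; fun_prop
  set a : ℝ := 1 / (|β2| + |L2| + 1) with ha
  set b : ℝ := (-β2) / (|L2| + 1) with hb
  have hapos : 0 < a := by positivity
  have hbpos : 0 < b := by
    apply div_pos (by linarith) (by positivity)
  set ε : ℝ := min (Real.sqrt a) (Real.sqrt b) with hε
  have hεpos : 0 < ε := lt_min (Real.sqrt_pos.mpr hapos) (Real.sqrt_pos.mpr hbpos)
  refine ⟨ε, hεpos, fun ρ0 hρ0 hρ0ε => ?_⟩
  -- key lemma
  have key : ∀ ρ : ℝ, 0 < ρ → ρ < ε → 0 < g ρ ∧ g ρ < ρ := by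
    intro ρ hρ hρε
    have h1 : ρ ^ 2 < a := by
      have := lt_of_lt_of_le hρε (min_le_left _ _)
      exact (Real.lt_sqrt hρ.le).mp this
    have h2 : ρ ^ 2 < b := by
      have := lt_of_lt_of_le hρε (min_le_right _ _)
      exact (Real.lt_sqrt hρ.le).mp this
    have h1' : ρ ^ 2 * (|β2| + |L2| + 1) < 1 := by
      rw [ha, lt_div_iff₀ (by positivity)] at h1
      linarith [h1]
    have h2' : ρ ^ 2 * (|L2| + 1) < -β2 := by
      rw [hb, lt_div_iff₀ (by positivity)] at h2
      linarith [h2]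
    have hρ2 : ρ ^ 2 < 1 := by
      nlinarith [abs_nonneg β2, abs_nonneg L2, sq_nonneg ρ]
    have hb2 : β2 ≤ |β2| := le_abs_self β2
    have hb2' : -|β2| ≤ β2 := neg_abs_le β2
    have hL2 : L2 ≤ |L2| := le_abs_self L2
    have hL2' : -|L2| ≤ L2 := neg_abs_le L2
    have hρ2pos : 0 < ρ ^ 2 := by positivity
    have hfpos : 0 < 1 + 0 + β2 * ρ ^ 2 + L2 * ρ ^ 4 := by
      nlinarith [sq_nonneg ρ, sq_nonneg (ρ^2), hρ2pos]
    have hneg : β2 + L2 * ρ ^ 2 < 0 := by nlinarith [hρ2pos]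
    have hflt : 1 + 0 + β2 * ρ ^ 2 + L2 * ρ ^ 4 < 1 := by
      nlinarith [mul_neg_of_pos_of_neg hρ2pos hneg]
    constructor
    · rw [hg]; exact mul_pos hρ hfpos
    · rw [hg]
      calc ρ * (1 + 0 + β2 * ρ ^ 2 + L2 * ρ ^ 4) < ρ * 1 := by
            exact (mul_lt_mul_iff_right₀ hρ).mpr hflt
        _ = ρ := mul_one ρ
  -- orbit stays in (0, ε)
  have horb : ∀ n : ℕ, 0 < g^[n] ρ0 ∧ g^[n] ρ0 < ε := by
    intro n
    induction n with
    | zero => simpa using ⟨hρ0, hρ0ε⟩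
    | succ n ih =>
      rw [Function.iterate_succ_apply']
      obtain ⟨h1, h2⟩ := key _ ih.1 ih.2
      exact ⟨h1, lt_trans h2 ih.2⟩
  have hdec : StrictAnti (fun n : ℕ => g^[n] ρ0) := by
    apply strictAnti_nat_of_succ_lt
    intro n
    rw [Function.iterate_succ_apply']
    exact (key _ (horb n).1 (horb n).2).2
  refine ⟨hdec, ?_⟩
  -- convergence
  have hbdd : BddBelow (Set.range fun n : ℕ => g^[n] ρ0) := by
    refine ⟨0, ?_⟩
    rintro x ⟨n, rfl⟩
    exact (horb n).1.le
  have hanti : Antitone (fun n : ℕ => g^[n] ρ0) := hdec.antitone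
  set L : ℝ := ⨅ n : ℕ, g^[n] ρ0 with hL
  have hconv : Tendsto (fun n : ℕ => g^[n] ρ0) atTop (𝓝 L) :=
    tendsto_atTop_ciInf hanti hbdd
  have hL0 : 0 ≤ L := le_ciInf fun n => (horb n).1.le
  have hLε : L < ε := lt_of_le_of_lt (ciInf_le hbdd 0) (by simpa using hρ0ε)
  -- L is a fixed point
  have hfix : g L = L := by
    have h1 : Tendsto (fun n : ℕ => g^[n + 1] ρ0) atTop (𝓝 L) :=
      hconv.comp (tendsto_add_atTop_nat 1)
    have h2 : Tendsto (fun n : ℕ => g (g^[n] ρ0)) atTop (𝓝 (g L)) :=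
      (hgc.continuousAt.tendsto).comp hconv
    have h3 : (fun n : ℕ => g^[n + 1] ρ0) = fun n : ℕ => g (g^[n] ρ0) := by
      funext n; rw [Function.iterate_succ_apply']
    rw [h3] at h1
    exact tendsto_nhds_unique h2 h1
  have hL0' : L = 0 := by
    by_contra h
    have hLpos : 0 < L := lt_of_le_of_ne hL0 (Ne.symm h)
    have := (key L hLpos hLε).2
    rw [hfix] at this
    exact lt_irrefl L this
  rwa [hL0'] at hconv
end

section
/- Let β1, β2, L2 be real constants with L2 < 0, β1 < 0, β2 > 0 and Δ = β2² − 4 β1 L2 > 0. Then both roots y1 = (√Δ − β2)/(2 L2) and y2 = −(√Δ + β2)/(2 L2) of L2 y² + β2 y + β1 = 0 are positive with y1 < y2, and g has exactly two positive fixed points √y1 and √y2, with g'(√y1) = 1 + 2 y1 √Δ > 1 (unstable circle) and g'(√y2) = 1 − 2 y2 √Δ < 1 (stable circle). -/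
/-! Fixed points `ρ > 0` of `g` are the square roots of the positive roots `y` of
`L2 y² + β2 y + β1`. Since `β1 L2 > 0` we have `√Δ < β2`, so both roots `(-β2 ± √Δ)/(2 L2)`
are positive. On such a root, `g'(√y) = 1 + β1 + 3 β2 y + 5 L2 y² = 1 + 2 y (2 L2 y + β2)`,
and `2 L2 y + β2 = ±√Δ` is the slope of the quadratic at its two roots. -/

open Real

section QuadraticRoots

variable {a b c s : ℝ}

lemma quadratic_root_add_pos (ha : a < 0) (hb : 0 < b) (hc : c < 0)
    (hs : discrim a b c = s * s) : 0 < (-b + s) / (2 * a) := by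
  have hsb : s < b := by
    have hss : s * s < b * b := by
      rw [← hs, discrim]
      nlinarith [mul_pos_of_neg_of_neg ha hc]
    nlinarith
  exact div_pos_of_neg_of_neg (by linarith) (by linarith)

lemma quadratic_root_sub_pos (ha : a < 0) (hb : 0 < b) (hs : 0 ≤ s) :
    0 < (-b - s) / (2 * a) :=
  div_pos_of_neg_of_neg (by linarith) (by linarith)

lemma quadratic_root_add_lt_root_sub (ha : a < 0) (hs : 0 < s) :
    (-b + s) / (2 * a) < (-b - s) / (2 * a) :=
  (div_lt_div_right_of_neg (by linarith)).2 (by linarith)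

end QuadraticRoots

section RhoMap

variable (β1 β2 L2 : ℝ)

def rhoMap (ρ : ℝ) : ℝ := ρ * (1 + β1 + β2 * ρ ^ 2 + L2 * ρ ^ 4)

lemma hasDerivAt_rhoMap (ρ : ℝ) :
    HasDerivAt (rhoMap β1 β2 L2) (1 + β1 + 3 * β2 * ρ ^ 2 + 5 * L2 * ρ ^ 4) ρ := by
  have h := (((hasDerivAt_id' ρ).const_mul (1 + β1)).fun_add
    ((hasDerivAt_pow 3 ρ).const_mul β2)).fun_add ((hasDerivAt_pow 5 ρ).const_mul L2)
  rw [show rhoMap β1 β2 L2 = fun ρ => (1 + β1) * ρ + β2 * ρ ^ 3 + L2 * ρ ^ 5 by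
    funext ρ; simp only [rhoMap]; ring]
  exact h.congr_deriv (by norm_num; ring)

variable {β1 β2 L2}

lemma rhoMap_eq_self_iff {ρ : ℝ} (hρ : ρ ≠ 0) :
    rhoMap β1 β2 L2 ρ = ρ ↔ L2 * ((ρ * ρ) * (ρ * ρ)) + β2 * (ρ * ρ) + β1 = 0 := by
  have h : rhoMap β1 β2 L2 ρ - ρ = ρ * (L2 * ((ρ * ρ) * (ρ * ρ)) + β2 * (ρ * ρ) + β1) := by
    simp only [rhoMap]
    ring
  rw [← sub_eq_zero, h, mul_eq_zero, or_iff_right hρ]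

lemma deriv_rhoMap_sqrt_of_root {y : ℝ} (hy : 0 ≤ y) (hroot : L2 * y ^ 2 + β2 * y + β1 = 0) :
    deriv (rhoMap β1 β2 L2) √y = 1 + 2 * y * (2 * L2 * y + β2) := by
  have hy4 : √y ^ 4 = y ^ 2 := by rw [show 4 = 2 * 2 from rfl, pow_mul, sq_sqrt hy]
  rw [(hasDerivAt_rhoMap β1 β2 L2 √y).deriv, hy4, sq_sqrt hy]
  linear_combination hroot

end RhoMap

/-- For the truncated ρ-map `g ρ = ρ (1 + β1 + β2 ρ² + L2 ρ⁴)` with `L2 < 0`,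
`β1 < 0`, `β2 > 0` and positive discriminant `Δ = β2² − 4 β1 L2 > 0`: both
roots `y1 = (√Δ − β2)/(2 L2)` and `y2 = −(√Δ + β2)/(2 L2)` of
`L2 y² + β2 y + β1 = 0` are positive with `y1 < y2`, and `g` has exactly two
positive fixed points `√y1` (unstable, `g'(√y1) = 1 + 2 y1 √Δ > 1`) and `√y2`
(stable, `g'(√y2) = 1 − 2 y2 √Δ < 1`). -/
theorem chenciner_two_circles_neg_L
    (β1 β2 L2 : ℝ) (hL2 : L2 < 0) (hβ1 : β1 < 0) (hβ2 : 0 < β2)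
    (hΔ : 0 < β2 ^ 2 - 4 * β1 * L2)
    (g : ℝ → ℝ)
    (hg : ∀ ρ : ℝ, g ρ = ρ * (1 + β1 + β2 * ρ ^ 2 + L2 * ρ ^ 4)) :
    let Δ := β2 ^ 2 - 4 * β1 * L2
    let y1 := (Real.sqrt Δ - β2) / (2 * L2)
    let y2 := -(Real.sqrt Δ + β2) / (2 * L2)
    0 < y1 ∧ 0 < y2 ∧ y1 < y2 ∧
    L2 * y1 ^ 2 + β2 * y1 + β1 = 0 ∧
    L2 * y2 ^ 2 + β2 * y2 + β1 = 0 ∧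
    (∀ ρ : ℝ, 0 < ρ → (g ρ = ρ ↔ ρ = Real.sqrt y1 ∨ ρ = Real.sqrt y2)) ∧
    deriv g (Real.sqrt y1) = 1 + 2 * y1 * Real.sqrt Δ ∧
    1 < 1 + 2 * y1 * Real.sqrt Δ ∧
    deriv g (Real.sqrt y2) = 1 - 2 * y2 * Real.sqrt Δ ∧
    1 - 2 * y2 * Real.sqrt Δ < 1 := by
  intro Δ y1 y2
  have hs : discrim L2 β2 β1 = √Δ * √Δ := by rw [mul_self_sqrt hΔ.le, discrim]; ring
  have hs0 : 0 < √Δ := sqrt_pos.2 hΔ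
  have hy1 : y1 = (-β2 + √Δ) / (2 * L2) := by simp only [y1]; ring
  have hy2 : y2 = (-β2 - √Δ) / (2 * L2) := by simp only [y2]; ring
  have hroots (y : ℝ) : L2 * (y * y) + β2 * y + β1 = 0 ↔ y = y1 ∨ y = y2 := by
    rw [hy1, hy2]; exact quadratic_eq_zero_iff hL2.ne hs y
  have hroot1 := (hroots y1).2 (Or.inl rfl)
  have hroot2 := (hroots y2).2 (Or.inr rfl)
  have hy1pos : 0 < y1 := hy1 ▸ quadratic_root_add_pos hL2 hβ2 hβ1 hs
  have hy2pos : 0 < y2 := hy2 ▸ quadratic_root_sub_pos hL2 hβ2 hs0.le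
  have h2L2 : 2 * L2 ≠ 0 := mul_ne_zero two_ne_zero hL2.ne
  have hslope1 : 2 * L2 * y1 + β2 = √Δ := by rw [hy1, mul_div_cancel₀ _ h2L2]; ring
  have hslope2 : 2 * L2 * y2 + β2 = -√Δ := by rw [hy2, mul_div_cancel₀ _ h2L2]; ring
  obtain rfl : g = rhoMap β1 β2 L2 := funext hg
  rw [← sq] at hroot1 hroot2
  refine ⟨hy1pos, hy2pos, hy1 ▸ hy2 ▸ quadratic_root_add_lt_root_sub hL2 hs0, hroot1, hroot2,
    fun ρ hρ => ?_, ?_, ?_, ?_, ?_⟩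
  · rw [rhoMap_eq_self_iff hρ.ne', hroots, eq_comm (a := ρ), eq_comm (a := ρ),
      sqrt_eq_iff_mul_self_eq_of_pos hρ, sqrt_eq_iff_mul_self_eq_of_pos hρ]
  · rw [deriv_rhoMap_sqrt_of_root hy1pos.le hroot1, hslope1]
  · have := mul_pos (mul_pos two_pos hy1pos) hs0
    linarith
  · rw [deriv_rhoMap_sqrt_of_root hy2pos.le hroot2, hslope2]
    ring
  · have := mul_pos (mul_pos two_pos hy2pos) hs0
    linarith
end

section
/- Let β1, β2, L2 be real constants with L2 ≠ 0, Δ = β2² − 4 β1 L2 = 0 and β2 L2 < 0. Then y = −β2/(2 L2) > 0, ρ* = √y is a fixed point of g, for every ρ one has g(ρ) − ρ = L2 ρ (ρ² − y)², and ρ* is an unstable fixed point: there exists ε > 0 such that for every δ > 0 there is ρ0 with 0 < |ρ0 − ρ*| < δ whose orbit under g has some iterate at distance at least ε from ρ*. -/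
/-!
Zero discriminant makes `L2 y² + β2 y + β1` the perfect square `L2 (y − y*)²`, so the displacement
`g ρ − ρ = L2 ρ (ρ² − y*)²` vanishes at `ρ*` but has the sign of `L2` on both sides of it. Hence the
orbit of a point next to `ρ*` on the side towards which `L2` pushes moves monotonically away, and on
the region `c ≤ |ρ − ρ*| < ρ*/2` it moves by a fixed amount per step, so it leaves that region
after finitely many steps.
-/

open Function

theorem quadratic_eq_mul_sq_of_discrim_eq_zero {K : Type*} [Field K] [NeZero (2 : K)]
    {a b c : K} (ha : a ≠ 0) (h : discrim a b c = 0) (x : K) :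
    a * (x * x) + b * x + c = a * (x + b / (2 * a)) ^ 2 := by
  rw [discrim] at h
  field_simp
  linear_combination -h

theorem exists_iterate_ge_of_forall_add_le {g : ℝ → ℝ} {a b K : ℝ} (hK : 0 < K)
    (hg : ∀ x ∈ Set.Ico a b, x + K ≤ g x) : ∃ n, b ≤ g^[n] a := by
  by_contra! hlt
  have hgrow : ∀ n : ℕ, a + n * K ≤ g^[n] a := by
    intro n
    induction n with
    | zero => simp
    | succ n ih =>
      have hstep := hg _ ⟨by nlinarith [n.cast_nonneg (α := ℝ)], hlt n⟩
      rw [iterate_succ_apply']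
      push_cast
      linarith
  obtain ⟨n, hn⟩ := exists_nat_gt ((b - a) / K)
  rw [div_lt_iff₀ hK] at hn
  linarith [hgrow n, hlt n]

theorem exists_iterate_le_of_forall_le_sub {g : ℝ → ℝ} {a b K : ℝ} (hK : 0 < K)
    (hg : ∀ x ∈ Set.Ioc a b, g x ≤ x - K) : ∃ n, g^[n] b ≤ a := by
  have hconj : Semiconj Neg.neg g (fun x ↦ -g (-x)) := fun x ↦ by simp
  obtain ⟨n, hn⟩ :=
    exists_iterate_ge_of_forall_add_le (g := fun x ↦ -g (-x)) (a := -b) (b := -a) hK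
      fun x hx ↦ by linarith [hg (-x) ⟨by linarith [hx.2], by linarith [hx.1]⟩]
  refine ⟨n, ?_⟩
  rw [← (hconj.iterate_right n).eq] at hn
  linarith

theorem le_mul_sq_sq_sub_sq {p c x : ℝ} (hp : 0 < p) (hc : 0 ≤ c) (hx : p / 2 ≤ x)
    (hcx : c ≤ |x - p|) :
    p / 2 * (c * p) ^ 2 ≤ x * (x ^ 2 - p ^ 2) ^ 2 := by
  have hprod : |c * p| ≤ |x ^ 2 - p ^ 2| := by
    rw [show x ^ 2 - p ^ 2 = (x - p) * (x + p) by ring, abs_mul, abs_mul, abs_of_pos hp,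
      abs_of_nonneg hc, abs_of_pos (by linarith : 0 < x + p)]
    exact mul_le_mul hcx (by linarith) hp.le (abs_nonneg _)
  exact mul_le_mul hx (sq_le_sq.mpr hprod) (sq_nonneg _) (by linarith)

theorem exists_iterate_le_half_of_sub_eq_of_neg {g : ℝ → ℝ} {L p c : ℝ} (hL : L < 0)
    (hp : 0 < p) (hdisp : ∀ x, g x - x = L * x * (x ^ 2 - p ^ 2) ^ 2) (hc : 0 < c) :
    ∃ n, g^[n] (p - c) ≤ p / 2 :=
  exists_iterate_le_of_forall_le_sub (K := -L * (p / 2 * (c * p) ^ 2))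
    (mul_pos (neg_pos.mpr hL) (by positivity)) fun x hx ↦ by
      have := le_mul_sq_sq_sub_sq (x := x) hp hc.le hx.1.le
        (by rw [abs_sub_comm, abs_of_nonneg] <;> linarith [hx.2])
      nlinarith [hdisp x]

theorem exists_iterate_ge_three_halves_of_sub_eq_of_pos {g : ℝ → ℝ} {L p c : ℝ} (hL : 0 < L)
    (hp : 0 < p) (hdisp : ∀ x, g x - x = L * x * (x ^ 2 - p ^ 2) ^ 2) (hc : 0 < c) :
    ∃ n, p + p / 2 ≤ g^[n] (p + c) :=
  exists_iterate_ge_of_forall_add_le (K := L * (p / 2 * (c * p) ^ 2)) (by positivity)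
    fun x hx ↦ by
      have := le_mul_sq_sq_sub_sq (x := x) hp hc.le (by linarith [hx.1])
        (by rw [abs_of_nonneg] <;> linarith [hx.1])
      nlinarith [hdisp x]

theorem exists_iterate_escape_of_sub_eq {g : ℝ → ℝ} {L p : ℝ} (hL : L ≠ 0) (hp : 0 < p)
    (hdisp : ∀ x, g x - x = L * x * (x ^ 2 - p ^ 2) ^ 2) :
    ∃ ε > (0 : ℝ), ∀ δ > (0 : ℝ), ∃ x₀ : ℝ,
      0 < |x₀ - p| ∧ |x₀ - p| < δ ∧ ∃ n : ℕ, ε ≤ |g^[n] x₀ - p| := by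
  refine ⟨p / 2, half_pos hp, fun δ hδ ↦ ?_⟩
  have hc : 0 < δ / 2 := half_pos hδ
  have hcδ : δ / 2 < δ := half_lt_self hδ
  rcases hL.lt_or_gt with hL | hL
  · obtain ⟨n, hn⟩ := exists_iterate_le_half_of_sub_eq_of_neg hL hp hdisp hc
    refine ⟨p - δ / 2, by simpa using hc.ne', by simpa [abs_of_pos hc] using hcδ, n, ?_⟩
    rw [abs_sub_comm, abs_of_nonneg] <;> linarith
  · obtain ⟨n, hn⟩ := exists_iterate_ge_three_halves_of_sub_eq_of_pos hL hp hdisp hc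
    refine ⟨p + δ / 2, by simpa using hc.ne', by simpa [abs_of_pos hc] using hcδ, n, ?_⟩
    rw [abs_of_nonneg] <;> linarith

/-- For the truncated ρ-map `g ρ = ρ (1 + β1 + β2 ρ² + L2 ρ⁴)` with `L2 ≠ 0`,
zero discriminant `Δ = β2² − 4 β1 L2 = 0` and `β2 L2 < 0`: the double root
`y = −β2/(2 L2)` is positive, `ρ* = √y` is a fixed point of `g`, one has
`g(ρ) − ρ = L2 ρ (ρ² − y)²` for every `ρ`, and `ρ*` is an unstable fixed
point. -/
theorem chenciner_circle_on_zero_discriminant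
    (β1 β2 L2 : ℝ) (hL2 : L2 ≠ 0)
    (hΔ : β2 ^ 2 - 4 * β1 * L2 = 0) (hβ2L2 : β2 * L2 < 0)
    (g : ℝ → ℝ)
    (hg : ∀ ρ : ℝ, g ρ = ρ * (1 + β1 + β2 * ρ ^ 2 + L2 * ρ ^ 4)) :
    let y := -β2 / (2 * L2)
    let ρs := Real.sqrt y
    0 < y ∧
    g ρs = ρs ∧
    (∀ ρ : ℝ, g ρ - ρ = L2 * ρ * (ρ ^ 2 - y) ^ 2) ∧
    ∃ ε > (0 : ℝ), ∀ δ > (0 : ℝ), ∃ ρ0 : ℝ,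
      0 < |ρ0 - ρs| ∧ |ρ0 - ρs| < δ ∧ ∃ n : ℕ, ε ≤ |g^[n] ρ0 - ρs| := by
  intro y ρs
  have hy : 0 < y := by
    have : y = -(β2 * L2) / (2 * L2 ^ 2) := by simp only [y]; field_simp
    rw [this]
    exact div_pos (neg_pos.mpr hβ2L2) (by positivity)
  have hρs_sq : ρs ^ 2 = y := Real.sq_sqrt hy.le
  have hdisp (ρ : ℝ) : g ρ - ρ = L2 * ρ * (ρ ^ 2 - y) ^ 2 := by
    have hsq := quadratic_eq_mul_sq_of_discrim_eq_zero hL2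
      (by rw [discrim]; linear_combination hΔ) (ρ ^ 2) (b := β2) (c := β1)
    rw [hg, show ρ ^ 2 - y = ρ ^ 2 + β2 / (2 * L2) by ring]
    linear_combination ρ * hsq
  refine ⟨hy, sub_eq_zero.mp (by rw [hdisp, hρs_sq]; ring), hdisp, ?_⟩
  exact exists_iterate_escape_of_sub_eq hL2 (Real.sqrt_pos.mpr hy) (hρs_sq ▸ hdisp)
end

section
/- Let β1, β2, L2 : ℝ² → ℝ be continuously differentiable on a neighborhood of the origin with β1(0,0) = β2(0,0) = 0, L2(0,0) = L0 ≠ 0, partial derivatives at the origin ∂β1/∂αᵢ(0) = cᵢ, ∂β2/∂αᵢ(0) = dᵢ, ∂L2/∂αᵢ(0) = lᵢ, and satisfying the degeneracy condition c1 d2 − c2 d1 = 0. Define S : ℝ² → ℝ² by S(α) = (β2(α)² − 4 β1(α) L2(α), β2(α) + L2(α) − L0). Then S admits a local C¹ inverse near the origin (i.e., S is a local diffeomorphism at (0,0)) if and only if c1 l2 − c2 l1 ≠ 0. -/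
/-!
The derivative of `S` at the origin has rows `-4 L0 (c1, c2)` and `(d1 + l1, d2 + l2)`, so its
determinant is `-4 L0 ((c1 d2 - c2 d1) + (c1 l2 - c2 l1))`, which under the degeneracy condition
is `-4 L0 (c1 l2 - c2 l1)`. If it is nonzero, the inverse function theorem produces the local
`C¹` inverse; conversely, differentiating `T ∘ S = id` at the origin shows that a local `C¹`
inverse forces the derivative of `S` to be injective.
-/
open Function

theorem LinearMap.det_eq_of_prod_self {K : Type*} [Field K] (f : K × K →ₗ[K] K × K) :
    LinearMap.det f = (f (1, 0)).1 * (f (0, 1)).2 - (f (0, 1)).1 * (f (1, 0)).2 := by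
  rw [← LinearMap.det_toMatrix (Module.Basis.finTwoProd K), Matrix.det_fin_two]
  simp [LinearMap.toMatrix_apply]

theorem LinearMap.injective_iff_det_ne_zero {K V : Type*} [Field K] [AddCommGroup V] [Module K V]
    [FiniteDimensional K V] (f : V →ₗ[K] V) : Injective f ↔ LinearMap.det f ≠ 0 := by
  rw [Ne, LinearMap.det_eq_zero_iff_ker_ne_bot, not_not, LinearMap.ker_eq_bot]

variable {𝕜 E F : Type*}

section LocalInverse

variable [NontriviallyNormedField 𝕜] [NormedAddCommGroup E] [NormedSpace 𝕜 E]
  [NormedAddCommGroup F] [NormedSpace 𝕜 F]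

variable (𝕜) in
def HasLocalContDiffInverseAt (f : E → F) (a : E) : Prop :=
  ∃ (g : F → E) (U : Set E) (V : Set F), IsOpen U ∧ IsOpen V ∧ a ∈ U ∧ f a ∈ V ∧
    ContDiffOn 𝕜 1 g V ∧ Set.MapsTo f U V ∧ Set.MapsTo g V U ∧
    (∀ x ∈ U, g (f x) = x) ∧ ∀ y ∈ V, f (g y) = y

theorem HasLocalContDiffInverseAt.injective {f : E → F} {f' : E →L[𝕜] F} {a : E}
    (hinv : HasLocalContDiffInverseAt 𝕜 f a) (hf : HasFDerivAt f f' a) : Injective f' := by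
  obtain ⟨g, U, V, hU, hV, haU, hfaV, hg, -, -, hgf, -⟩ := hinv
  have hg' : HasFDerivAt g (fderiv 𝕜 g (f a)) (f a) :=
    ((hg.contDiffAt (hV.mem_nhds hfaV)).differentiableAt one_ne_zero).hasFDerivAt
  have hgf_id : g ∘ f =ᶠ[nhds a] id := Filter.eventually_of_mem (hU.mem_nhds haU) hgf
  have hcomp : (fderiv 𝕜 g (f a)).comp f' = ContinuousLinearMap.id 𝕜 E :=
    (hg'.comp a hf).unique ((hasFDerivAt_id a).congr_of_eventuallyEq hgf_id)
  exact LeftInverse.injective fun x => ContinuousLinearMap.ext_iff.mp hcomp x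

end LocalInverse

section InverseFunctionTheorem

variable [RCLike 𝕜] [NormedAddCommGroup E] [NormedSpace 𝕜 E] [NormedAddCommGroup F]
  [NormedSpace 𝕜 F] [CompleteSpace E]

theorem ContDiffAt.hasLocalContDiffInverseAt {f : E → F} {f' : E ≃L[𝕜] F} {a : E}
    (hf : ContDiffAt 𝕜 1 f a) (hf' : HasFDerivAt f (f' : E →L[𝕜] F) a) :
    HasLocalContDiffInverseAt 𝕜 f a := by
  set Φ := hf.toOpenPartialHomeomorph f hf' one_ne_zero
  obtain ⟨u, hu, hΦu⟩ := (hf.to_localInverse hf' one_ne_zero).contDiffOn le_rfl (by norm_num)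
  obtain ⟨W, hWu, hWo, hfaW⟩ := mem_nhds_iff.mp hu
  have hfa : f a ∈ Φ.target ∩ W :=
    ⟨hf.image_mem_toOpenPartialHomeomorph_target hf' one_ne_zero, hfaW⟩
  exact ⟨Φ.symm, Φ.source ∩ f ⁻¹' (Φ.target ∩ W), Φ.target ∩ W,
    Φ.isOpen_inter_preimage (Φ.open_target.inter hWo), Φ.open_target.inter hWo,
    ⟨hf.mem_toOpenPartialHomeomorph_source hf' one_ne_zero, hfa⟩, hfa,
    (hΦu.mono hWu).mono Set.inter_subset_right, fun x hx => hx.2,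
    fun y hy => ⟨Φ.map_target hy.1, show Φ (Φ.symm y) ∈ _ from (Φ.right_inv hy.1).symm ▸ hy⟩,
    fun x hx => Φ.left_inv hx.1, fun y hy => Φ.right_inv hy.1⟩

theorem hasLocalContDiffInverseAt_iff_injective [FiniteDimensional 𝕜 E] {f : E → E}
    {f' : E →L[𝕜] E} {a : E} (hf : ContDiffAt 𝕜 1 f a) (hf' : HasFDerivAt f f' a) :
    HasLocalContDiffInverseAt 𝕜 f a ↔ Injective f' := by
  refine ⟨fun hinv => hinv.injective hf', fun hinj => ?_⟩
  let e := (LinearEquiv.ofInjectiveEndo (f' : E →ₗ[𝕜] E) hinj).toContinuousLinearEquiv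
  exact hf.hasLocalContDiffInverseAt (f' := e) hf'

end InverseFunctionTheorem

theorem hasFDerivAt_discriminant_prod {E : Type*} [NormedAddCommGroup E] [NormedSpace ℝ E]
    {b₁ b₂ L : E → ℝ} {P Q R : E →L[ℝ] ℝ} {a : E} (c : ℝ) (hb₁ : HasFDerivAt b₁ P a)
    (hb₂ : HasFDerivAt b₂ Q a) (hL : HasFDerivAt L R a) (hb₁a : b₁ a = 0) (hb₂a : b₂ a = 0) :
    HasFDerivAt (fun x => (b₂ x ^ 2 - 4 * b₁ x * L x, b₂ x + L x - c))
      (((-4 * L a) • P).prod (Q + R)) a := by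
  refine (((hb₂.pow 2).sub ((hb₁.const_mul 4).mul hL)).prodMk
    ((hb₂.add hL).sub_const c)).congr_fderiv ?_
  ext v <;> simp [hb₁a, hb₂a, mul_assoc, mul_left_comm (L a)]

/-- Under the degeneracy condition `c1 d2 − c2 d1 = 0`, the transformation
`S(α) = (β2(α)² − 4 β1(α) L2(α), β2(α) + L2(α) − L0)` admits a local C¹
inverse near the origin (i.e. `S` is a local diffeomorphism at `(0,0)`) if and
only if `c1 l2 − c2 l1 ≠ 0`. -/
theorem chenciner_new_transformation_regular_iff
    (β1 β2 L2 : ℝ × ℝ → ℝ) (L0 c1 c2 d1 d2 l1 l2 : ℝ)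
    (hβ1C1 : ContDiffAt ℝ 1 β1 (0, 0))
    (hβ2C1 : ContDiffAt ℝ 1 β2 (0, 0))
    (hL2C1 : ContDiffAt ℝ 1 L2 (0, 0))
    (hβ10 : β1 (0, 0) = 0) (hβ20 : β2 (0, 0) = 0) (hL20 : L2 (0, 0) = L0)
    (hL0 : L0 ≠ 0)
    (hc1 : fderiv ℝ β1 (0, 0) (1, 0) = c1)
    (hc2 : fderiv ℝ β1 (0, 0) (0, 1) = c2)
    (hd1 : fderiv ℝ β2 (0, 0) (1, 0) = d1)
    (hd2 : fderiv ℝ β2 (0, 0) (0, 1) = d2)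
    (hl1 : fderiv ℝ L2 (0, 0) (1, 0) = l1)
    (hl2 : fderiv ℝ L2 (0, 0) (0, 1) = l2)
    (hdeg : c1 * d2 - c2 * d1 = 0)
    (S : ℝ × ℝ → ℝ × ℝ)
    (hS : ∀ α : ℝ × ℝ,
      S α = (β2 α ^ 2 - 4 * β1 α * L2 α, β2 α + L2 α - L0)) :
    (∃ (T : ℝ × ℝ → ℝ × ℝ) (U V : Set (ℝ × ℝ)),
      IsOpen U ∧ IsOpen V ∧ (0, 0) ∈ U ∧ (0, 0) ∈ V ∧
      ContDiffOn ℝ 1 T V ∧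
      Set.MapsTo S U V ∧ Set.MapsTo T V U ∧
      (∀ x ∈ U, T (S x) = x) ∧ (∀ y ∈ V, S (T y) = y)) ↔
    c1 * l2 - c2 * l1 ≠ 0 := by
  have hS' : S = fun α => (β2 α ^ 2 - 4 * β1 α * L2 α, β2 α + L2 α - L0) := funext hS
  have hS0 : S (0, 0) = (0, 0) := by simp [hS, hβ10, hβ20, hL20]
  have hSC1 : ContDiffAt ℝ 1 S (0, 0) := by rw [hS']; fun_prop
  set A := ((-4 * L0) • fderiv ℝ β1 (0, 0)).prod (fderiv ℝ β2 (0, 0) + fderiv ℝ L2 (0, 0))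
  have hA : HasFDerivAt S A (0, 0) := by
    have h := hasFDerivAt_discriminant_prod L0 (hβ1C1.differentiableAt one_ne_zero).hasFDerivAt
      (hβ2C1.differentiableAt one_ne_zero).hasFDerivAt
      (hL2C1.differentiableAt one_ne_zero).hasFDerivAt hβ10 hβ20
    rwa [hL20, ← hS'] at h
  have hdetA : LinearMap.det (A : ℝ × ℝ →ₗ[ℝ] ℝ × ℝ) = -4 * L0 * (c1 * l2 - c2 * l1) := by
    rw [LinearMap.det_eq_of_prod_self]
    simp only [A, ContinuousLinearMap.coe_prod, ContinuousLinearMap.toLinearMap_smul,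
      ContinuousLinearMap.toLinearMap_add, LinearMap.prod_apply, LinearMap.coe_smul,
      ContinuousLinearMap.coe_coe, Function.prod_apply, Pi.smul_apply, smul_eq_mul,
      LinearMap.add_apply, hc1, hc2, hd1, hd2, hl1, hl2]
    linear_combination (-4 * L0) * hdeg
  calc _ ↔ HasLocalContDiffInverseAt ℝ S (0, 0) := by rw [HasLocalContDiffInverseAt, hS0]
    _ ↔ Injective A := hasLocalContDiffInverseAt_iff_injective hSC1 hA
    _ ↔ _ := by
      rw [← ContinuousLinearMap.coe_coe, LinearMap.injective_iff_det_ne_zero, hdetA]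
      simp [hL0]
end
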